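/- arXiv:2207.04280 — 6 statements merged into one kernel-verified Lean document; each statement's English description precedes it below -/
import Mathlib

section
/- Let p be a prime and α an element of the ring of integers of a finite extension of Q_p, with α transcendental over Q. Then the valuation ring V_{p,α} = {φ ∈ Q(X) : v_p(φ(α)) ≥ 0} is a discrete valuation ring (DVR). -/
open Polynomial

namespace Stmt2Aux

variable {p : ℕ} [Fact p.Prime]

section Core

variable {F : Type*} [Field F] [Algebra ℚ_[p] F] [FiniteDimensional ℚ_[p] F]
  [Algebra ℤ_[p] F] [IsScalarTower ℤ_[p] ℚ_[p] F]

theorem isIntegral_of_repr_bounded (b : Module.Basis (Fin (Module.finrank ℚ_[p] F)) ℚ_[p] F)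
    {x : F} {R : ℝ} (hb : ∀ k : ℕ, ‖b.equivFun (x ^ k)‖ ≤ R) : IsIntegral ℤ_[p] x := by
  have hp := (Fact.out : p.Prime)
  have hp1 : (1 : ℝ) < p := by exact_mod_cast hp.one_lt
  obtain ⟨t, ht⟩ := pow_unbounded_of_one_lt R hp1
  have hpQ : ((p : ℚ_[p]) ^ t) ≠ 0 :=
    pow_ne_zero _ (Nat.cast_ne_zero.mpr hp.ne_zero)
  set g : Fin (Module.finrank ℚ_[p] F) → F := fun i => ((p : ℚ_[p]) ^ t)⁻¹ • b i with hg
  set LS := Submodule.span ℤ_[p] (Set.range g) with hLS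
  have key : ∀ y : F, ‖b.equivFun y‖ ≤ (p : ℝ) ^ t → y ∈ LS := by
    intro y hy
    have hcoef : ∀ i, ‖(p : ℚ_[p]) ^ t * b.equivFun y i‖ ≤ 1 := by
      intro i
      have h1 : ‖b.equivFun y i‖ ≤ (p : ℝ) ^ t :=
        le_trans (norm_le_pi_norm (b.equivFun y) i) hy
      have h2 : ‖(p : ℚ_[p]) ^ t‖ = ((p : ℝ) ^ t)⁻¹ := by
        rw [norm_pow, Padic.norm_p, inv_pow]
      rw [norm_mul, h2, inv_mul_le_iff₀ (by positivity)]
      calc ‖b.equivFun y i‖ ≤ (p:ℝ)^t := h1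
        _ ≤ (p:ℝ)^t * 1 := by rw [mul_one]
    have hrepr : y = ∑ i, b.equivFun y i • b i := by
      conv_lhs => rw [← b.sum_repr y]
      simp [Module.Basis.equivFun_apply]
    rw [hrepr]
    refine Submodule.sum_mem _ fun i _ => ?_
    set z : ℤ_[p] := ⟨(p : ℚ_[p]) ^ t * b.equivFun y i, hcoef i⟩ with hz
    have : b.equivFun y i • b i = z • g i := by
      have hsmul : z • g i = ((p : ℚ_[p]) ^ t * b.equivFun y i) • g i := by
        rw [← IsScalarTower.algebraMap_smul ℚ_[p] z (g i), PadicInt.algebraMap_apply]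
      rw [hsmul, hg, smul_smul, mul_comm ((p : ℚ_[p]) ^ t), mul_assoc,
        mul_inv_cancel₀ hpQ, mul_one]
    rw [this]
    exact Submodule.smul_mem _ _ (Submodule.subset_span ⟨i, rfl⟩)
  have hle : Subalgebra.toSubmodule (Algebra.adjoin ℤ_[p] {x}) ≤ LS := by
    rw [Algebra.adjoin_eq_span, Submodule.span_le]
    rintro y hy
    obtain ⟨k, rfl⟩ := Submonoid.mem_closure_singleton.mp hy
    exact key _ ((hb k).trans ht.le)
  have hLSfg : LS.FG := Submodule.fg_span (Set.finite_range g)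
  haveI : IsNoetherian ℤ_[p] LS := isNoetherian_of_fg_of_noetherian _ hLSfg
  have hMfg : (Subalgebra.toSubmodule (Algebra.adjoin ℤ_[p] {x})).FG := by
    have h1 : (Submodule.comap LS.subtype
        (Subalgebra.toSubmodule (Algebra.adjoin ℤ_[p] {x}))).FG := IsNoetherian.noetherian _
    have h2 := h1.map LS.subtype
    rwa [Submodule.map_comap_subtype, inf_eq_right.mpr hle] at h2
  exact IsIntegral.of_mem_of_fg _ hMfg x (Algebra.self_mem_adjoin_singleton ℤ_[p] x)

theorem isIntegral_of_norm_le_one {x : F} (hx : ‖Algebra.norm ℚ_[p] x‖ ≤ 1) :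
    IsIntegral ℤ_[p] x := by
  have hp := (Fact.out : p.Prime)
  have hp1 : (1 : ℝ) < p := by exact_mod_cast hp.one_lt
  have hp0 : (0 : ℝ) < p := lt_trans one_pos hp1
  set n := Module.finrank ℚ_[p] F with hn
  have hnpos : 0 < n := Module.finrank_pos
  set b := Module.finBasis ℚ_[p] F with hb
  set e := b.equivFun with he
  by_cases hbdd : ∃ R : ℝ, ∀ k : ℕ, ‖e (x ^ k)‖ ≤ R
  · obtain ⟨R, hR⟩ := hbdd
    exact isIntegral_of_repr_bounded b hR
  exfalso
  push_neg at hbdd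
  choose k hk using fun i : ℕ => hbdd ((p : ℝ) ^ (i : ℤ))
  set u : ℕ → F := fun i => x ^ k i with hu
  have hupos : ∀ i, (0 : ℝ) < ‖e (u i)‖ := fun i =>
    lt_of_le_of_lt (by positivity) (hk i)
  set m : ℕ → ℤ := fun i => ⌈Real.logb p ‖e (u i)‖⌉ with hm
  have hub : ∀ i, ‖e (u i)‖ ≤ (p : ℝ) ^ (m i) := by
    intro i
    have h1 : Real.logb p ‖e (u i)‖ ≤ (m i : ℝ) := Int.le_ceil _
    calc ‖e (u i)‖ = (p : ℝ) ^ (Real.logb p ‖e (u i)‖) :=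
          (Real.rpow_logb hp0 (ne_of_gt hp1) (hupos i)).symm
      _ ≤ (p : ℝ) ^ ((m i : ℝ)) := Real.rpow_le_rpow_left_iff hp1 |>.mpr h1
      _ = (p : ℝ) ^ (m i) := by rw [← Real.rpow_intCast]
  have hlb : ∀ i, (p : ℝ) ^ (m i - 1) < ‖e (u i)‖ := by
    intro i
    have h1 : ((m i : ℝ) - 1) < Real.logb p ‖e (u i)‖ := by
      have := Int.ceil_lt_add_one (Real.logb p ‖e (u i)‖)
      push_cast at this ⊢
      linarith
    calc (p : ℝ) ^ (m i - 1) = (p : ℝ) ^ (((m i - 1 : ℤ) : ℝ)) := by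
          rw [Real.rpow_intCast]
      _ < (p : ℝ) ^ (Real.logb p ‖e (u i)‖) := by
          apply Real.rpow_lt_rpow_left_iff hp1 |>.mpr
          push_cast
          linarith
      _ = ‖e (u i)‖ := Real.rpow_logb hp0 (ne_of_gt hp1) (hupos i)
  have hmi : ∀ i : ℕ, (i : ℤ) < m i := by
    intro i
    have := lt_of_lt_of_le (hk i) (hub i)
    exact (zpow_lt_zpow_iff_right₀ hp1).mp this
  set d : ℕ → F := fun i => ((p : ℚ_[p]) ^ (m i)) • u i with hd
  set v : ℕ → (Fin n → ℚ_[p]) := fun i => e (d i) with hv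
  have hnormp : ∀ z : ℤ, ‖((p : ℚ_[p]) ^ z)‖ = (p : ℝ) ^ (-z) := by
    intro z
    rw [norm_zpow, Padic.norm_p, ← zpow_neg_one, ← zpow_mul]
    ring_nf
  have hvnorm : ∀ i, ‖v i‖ = (p : ℝ) ^ (-(m i)) * ‖e (u i)‖ := by
    intro i
    rw [hv]
    show ‖e (((p : ℚ_[p]) ^ (m i)) • u i)‖ = _
    rw [map_smul, norm_smul, hnormp]
  have hv_le : ∀ i, ‖v i‖ ≤ 1 := by
    intro i
    rw [hvnorm i]
    have := hub i
    calc (p : ℝ) ^ (-(m i)) * ‖e (u i)‖ ≤ (p : ℝ) ^ (-(m i)) * (p : ℝ) ^ (m i) := by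
          apply mul_le_mul_of_nonneg_left this (by positivity)
      _ = 1 := by rw [← zpow_add₀ (ne_of_gt hp0)]; simp
  have hv_lb : ∀ i, (p : ℝ)⁻¹ ≤ ‖v i‖ := by
    intro i
    rw [hvnorm i]
    have h1 := hlb i
    have : (p : ℝ) ^ (-(m i)) * (p : ℝ) ^ (m i - 1) = (p : ℝ)⁻¹ := by
      rw [← zpow_add₀ (ne_of_gt hp0)]
      ring_nf
      rw [zpow_neg_one]
    calc (p : ℝ)⁻¹ = (p : ℝ) ^ (-(m i)) * (p : ℝ) ^ (m i - 1) := this.symm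
      _ ≤ (p : ℝ) ^ (-(m i)) * ‖e (u i)‖ := by
          apply mul_le_mul_of_nonneg_left h1.le (by positivity)
  -- compactness
  have hcpt : IsCompact (Metric.closedBall (0 : Fin n → ℚ_[p]) 1) :=
    isCompact_closedBall _ _
  have hmem : ∀ i, v i ∈ Metric.closedBall (0 : Fin n → ℚ_[p]) 1 := by
    intro i
    rw [Metric.mem_closedBall, dist_zero_right]
    exact hv_le i
  obtain ⟨w, -, σ, hσ, hconv⟩ := hcpt.tendsto_subseq hmem
  have hw0 : w ≠ 0 := by
    have hnlim : Filter.Tendsto (fun j => ‖(v ∘ σ) j‖) Filter.atTop (nhds ‖w‖) := hconv.norm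
    have : (p : ℝ)⁻¹ ≤ ‖w‖ :=
      le_of_tendsto_of_tendsto' tendsto_const_nhds hnlim fun j => hv_lb (σ j)
    intro h
    rw [h, norm_zero] at this
    have : (0 : ℝ) < (p : ℝ)⁻¹ := by positivity
    linarith
  -- continuity of norm form
  set Nfun : (Fin n → ℚ_[p]) → ℚ_[p] := fun y => Algebra.norm ℚ_[p] (e.symm y) with hNfun
  have hNform : ∀ y, Nfun y = Matrix.det (∑ i, y i • Algebra.leftMulMatrix b (b i)) := by
    intro y
    rw [hNfun]
    show Algebra.norm ℚ_[p] (e.symm y) = _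
    rw [Algebra.norm_eq_matrix_det b, he, Module.Basis.equivFun_symm_apply, map_sum]
    congr 1
    exact Finset.sum_congr rfl fun i _ =>
      ((Algebra.leftMulMatrix b).toLinearMap.map_smul (y i) (b i))
  have hNcont : Continuous Nfun := by
    rw [funext hNform]
    exact (continuous_finset_sum _ fun i _ =>
      (continuous_apply i).smul continuous_const).matrix_det
  have hNvi : ∀ i, Nfun (v i) = ((p : ℚ_[p]) ^ (m i)) ^ n * (Algebra.norm ℚ_[p] x) ^ (k i) := by
    intro i
    rw [hNfun]
    show Algebra.norm ℚ_[p] (e.symm (e (d i))) = _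
    rw [LinearEquiv.symm_apply_apply, hd]
    show Algebra.norm ℚ_[p] (((p : ℚ_[p]) ^ (m i)) • (x ^ k i)) = _
    rw [Algebra.smul_def, map_mul, Algebra.norm_algebraMap, map_pow, hn]
  have hNvi_norm : ∀ i, ‖Nfun (v i)‖ ≤ (p : ℝ) ^ (-(m i)) := by
    intro i
    rw [hNvi i, norm_mul, norm_pow, norm_pow, hnormp]
    have h1 : ‖Algebra.norm ℚ_[p] x‖ ^ (k i) ≤ 1 :=
      pow_le_one₀ (norm_nonneg _) hx
    have h2 : ((p : ℝ) ^ (-(m i))) ^ n ≤ (p : ℝ) ^ (-(m i)) := by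
      have hle1 : (p : ℝ) ^ (-(m i)) ≤ 1 := by
        apply zpow_le_one_of_nonpos₀ hp1.le
        have := hmi i
        omega
      calc ((p : ℝ) ^ (-(m i))) ^ n ≤ ((p : ℝ) ^ (-(m i))) ^ 1 :=
            pow_le_pow_of_le_one (by positivity) hle1 hnpos
        _ = (p : ℝ) ^ (-(m i)) := pow_one _
    calc ((p : ℝ) ^ (-(m i))) ^ n * ‖Algebra.norm ℚ_[p] x‖ ^ (k i)
        ≤ ((p : ℝ) ^ (-(m i))) ^ n * 1 := by
          apply mul_le_mul_of_nonneg_left h1 (by positivity)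
      _ = ((p : ℝ) ^ (-(m i))) ^ n := mul_one _
      _ ≤ (p : ℝ) ^ (-(m i)) := h2
  have hNlim : Filter.Tendsto (fun j => ‖Nfun ((v ∘ σ) j)‖) Filter.atTop (nhds ‖Nfun w‖) :=
    ((hNcont.tendsto w).comp hconv).norm
  have hsq : Filter.Tendsto (fun j => ‖Nfun ((v ∘ σ) j)‖) Filter.atTop (nhds 0) := by
    apply squeeze_zero (fun j => norm_nonneg _) (fun j => ?_)
      (g := fun j : ℕ => ((p : ℝ)⁻¹) ^ (j + 1))
    · exact (tendsto_pow_atTop_nhds_zero_of_lt_one (by positivity)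
        (inv_lt_one_of_one_lt₀ hp1)).comp (Filter.tendsto_add_atTop_nat 1)
    · calc ‖Nfun ((v ∘ σ) j)‖ ≤ (p : ℝ) ^ (-(m (σ j))) := hNvi_norm (σ j)
        _ ≤ (p : ℝ) ^ (-(j + 1 : ℤ)) := by
            apply zpow_le_zpow_right₀ hp1.le
            have h1 : (σ j : ℤ) < m (σ j) := hmi (σ j)
            have h2 : j ≤ σ j := hσ.le_apply
            omega
        _ = ((p : ℝ)⁻¹) ^ (j + 1) := by
            rw [zpow_neg, ← inv_zpow]
            norm_cast
  have : ‖Nfun w‖ = 0 := tendsto_nhds_unique hNlim hsq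
  have hNw : Nfun w = 0 := norm_eq_zero.mp this
  have : e.symm w = 0 := by
    by_contra h
    exact (Algebra.norm_ne_zero_iff.mpr h) hNw
  exact hw0 (by rwa [LinearEquiv.map_eq_zero_iff] at this)

theorem integral_iff_norm_le_one (x : F) :
    IsIntegral ℤ_[p] x ↔ ‖Algebra.norm ℚ_[p] x‖ ≤ 1 := by
  constructor
  · intro h
    have h1 : IsIntegral ℤ_[p] (Algebra.norm ℚ_[p] x) := Algebra.isIntegral_norm ℚ_[p] h
    obtain ⟨y, hy⟩ := IsIntegrallyClosed.isIntegral_iff.mp h1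
    rw [← hy, PadicInt.algebraMap_apply]
    exact y.2
  · exact isIntegral_of_norm_le_one

end Core


theorem aeval_inj {F : Type*} [Field F] [CharZero F] (x : F) (hx : Transcendental ℚ x) :
    Function.Injective (Polynomial.aeval x (R := ℚ)).toRingHom := by
  rw [injective_iff_map_eq_zero]
  intro q hq
  by_contra h
  exact hx ⟨q, h, hq⟩

noncomputable def ev {F : Type*} [Field F] [CharZero F] (x : F) (hx : Transcendental ℚ x) :
    RatFunc ℚ →+* F :=
  IsFractionRing.lift (aeval_inj x hx)

theorem ev_algebraMap {F : Type*} [Field F] [CharZero F] (x : F) (hx : Transcendental ℚ x)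
    (q : ℚ[X]) : ev x hx (algebraMap ℚ[X] (RatFunc ℚ) q) = Polynomial.aeval x q :=
  IsFractionRing.lift_algebraMap (aeval_inj x hx) q

theorem ev_eq {F : Type*} [Field F] [CharZero F] (x : F) (hx : Transcendental ℚ x)
    (φ : RatFunc ℚ) :
    ev x hx φ = Polynomial.aeval x φ.num / Polynomial.aeval x φ.denom := by
  conv_lhs => rw [← RatFunc.num_div_denom φ]
  rw [map_div₀, ev_algebraMap, ev_algebraMap]

end Stmt2Aux

/-- For a prime `p` and `α` integral over `ℤ_[p]`, transcendental over `ℚ`, the valuation ring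
`V_{p,α} = {φ ∈ ℚ(X) : v_p(φ(α)) ≥ 0}` (equivalently, `φ(α)` integral over `ℤ_[p]`) is a
discrete valuation ring. -/
theorem stmt2 (p : ℕ) [Fact p.Prime]
    (K : IntermediateField ℚ_[p] (AlgebraicClosure ℚ_[p])) (hK : FiniteDimensional ℚ_[p] K)
    (α : AlgebraicClosure ℚ_[p]) (hαK : α ∈ K) (hαint : IsIntegral ℤ_[p] α)
    (hαtr : Transcendental ℚ α) :
    ∃ W : ValuationSubring (RatFunc ℚ),
      (∀ φ : RatFunc ℚ,
        φ ∈ W ↔ IsIntegral ℤ_[p] (RatFunc.eval (algebraMap ℚ (AlgebraicClosure ℚ_[p])) α φ)) ∧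
      IsDiscreteValuationRing W := by
  classical
  haveI := hK
  haveI htow : IsScalarTower ℤ_[p] K (AlgebraicClosure ℚ_[p]) := by
    refine IsScalarTower.of_algebraMap_eq fun x => ?_
    rw [IsScalarTower.algebraMap_apply ℤ_[p] ℚ_[p] (AlgebraicClosure ℚ_[p]),
        IsScalarTower.algebraMap_apply ℤ_[p] ℚ_[p] K,
        IsScalarTower.algebraMap_apply ℚ_[p] K (AlgebraicClosure ℚ_[p])]
  set x₀ : K := ⟨α, hαK⟩ with hx₀def
  have hx₀ : algebraMap K (AlgebraicClosure ℚ_[p]) x₀ = α := rfl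
  have hx₀tr : Transcendental ℚ x₀ := by
    intro h
    exact hαtr h.algebraMap
  set ev0 := Stmt2Aux.ev x₀ hx₀tr with hev0
  have hev0inj : Function.Injective ev0 := ev0.injective
  -- bridge
  have hbridge : ∀ φ : RatFunc ℚ,
      RatFunc.eval (algebraMap ℚ (AlgebraicClosure ℚ_[p])) α φ = algebraMap K (AlgebraicClosure ℚ_[p]) (ev0 φ) := by
    intro φ
    rw [Stmt2Aux.ev_eq, map_div₀, RatFunc.eval]
    rw [← Polynomial.aeval_def, ← Polynomial.aeval_def,
      ← Polynomial.aeval_algebraMap_apply, ← Polynomial.aeval_algebraMap_apply, hx₀]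
  -- integrality transfer
  have htrans : ∀ y : K, IsIntegral ℤ_[p] (algebraMap K (AlgebraicClosure ℚ_[p]) y) ↔ IsIntegral ℤ_[p] y :=
    fun y => isIntegral_algebraMap_iff (algebraMap K (AlgebraicClosure ℚ_[p])).injective
  -- the valuation function
  set ν : K → ℤ := fun y => (Algebra.norm ℚ_[p] y).valuation with hν
  have hint_iff : ∀ y : K, y ≠ 0 → (IsIntegral ℤ_[p] y ↔ 0 ≤ ν y) := by
    intro y hy
    rw [Stmt2Aux.integral_iff_norm_le_one, Padic.norm_le_one_iff_val_nonneg]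
  have hNm0 : ∀ y : K, y ≠ 0 → Algebra.norm ℚ_[p] y ≠ 0 := fun y hy =>
    Algebra.norm_ne_zero_iff.mpr hy
  have hνmul : ∀ y z : K, y ≠ 0 → z ≠ 0 → ν (y * z) = ν y + ν z := by
    intro y z hy hz
    rw [hν]
    show (Algebra.norm ℚ_[p] (y * z)).valuation = _
    rw [map_mul]
    exact Padic.valuation_mul (hNm0 y hy) (hNm0 z hz)
  -- the subring
  set W0 : Subring (RatFunc ℚ) := (integralClosure ℤ_[p] K).toSubring.comap ev0 with hW0
  have hmemW0 : ∀ φ : RatFunc ℚ, φ ∈ W0 ↔ IsIntegral ℤ_[p] (ev0 φ) := fun φ => Iff.rfl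
  have hmem_or : ∀ φ : RatFunc ℚ, φ ∈ W0 ∨ φ⁻¹ ∈ W0 := by
    intro φ
    rcases eq_or_ne φ 0 with rfl | hφ
    · left; rw [hmemW0, map_zero]; exact isIntegral_zero
    have hx : ev0 φ ≠ 0 := fun h => hφ (hev0inj (by rwa [map_zero]))
    rcases le_total ‖Algebra.norm ℚ_[p] (ev0 φ)‖ 1 with h | h
    · left
      rw [hmemW0]
      exact Stmt2Aux.isIntegral_of_norm_le_one h
    · right
      rw [hmemW0, map_inv₀]
      apply Stmt2Aux.isIntegral_of_norm_le_one
      have hinv : Algebra.norm ℚ_[p] (ev0 φ)⁻¹ = (Algebra.norm ℚ_[p] (ev0 φ))⁻¹ := by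
        refine eq_inv_of_mul_eq_one_left ?_
        rw [← map_mul, inv_mul_cancel₀ hx, map_one]
      rw [hinv, norm_inv]
      exact inv_le_one_of_one_le₀ h
  set W : ValuationSubring (RatFunc ℚ) := ⟨W0, hmem_or⟩ with hW
  have hmemW : ∀ φ : RatFunc ℚ, φ ∈ W ↔ IsIntegral ℤ_[p] (ev0 φ) := fun φ => Iff.rfl
  refine ⟨W, fun φ => ?_, ?_⟩
  · rw [hmemW, hbridge, htrans]
  -- DVR
  have hval_nonneg : ∀ ψ : W, (ψ : RatFunc ℚ) ≠ 0 → 0 ≤ ν (ev0 ψ) := by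
    intro ψ hψ
    have h1 : IsIntegral ℤ_[p] (ev0 ψ) := (hmemW _).mp ψ.2
    have h2 : ev0 (ψ : RatFunc ℚ) ≠ 0 := fun h => hψ (hev0inj (by rwa [map_zero]))
    exact (hint_iff _ h2).mp h1
  haveI hPIR : IsPrincipalIdealRing W := by
    constructor
    intro I
    rcases eq_or_ne I ⊥ with rfl | hI
    · exact ⟨⟨0, (Ideal.span_zero).symm⟩⟩
    obtain ⟨b0, hb0I, hb0⟩ := (Submodule.ne_bot_iff I).mp hI
    have hcoe0 : ∀ ψ : W, ψ ≠ 0 → (ψ : RatFunc ℚ) ≠ 0 := fun ψ h hc => h (Subtype.ext hc)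
    have hev_ne : ∀ ψ : W, (ψ : RatFunc ℚ) ≠ 0 → ev0 ψ ≠ 0 := fun ψ h hc =>
      h (hev0inj (by rwa [map_zero]))
    set S : ℤ → Prop := fun z => ∃ ψ : W, ψ ∈ I ∧ (ψ : RatFunc ℚ) ≠ 0 ∧ ν (ev0 ψ) = z with hS
    have hSne : ∃ z, S z := ⟨ν (ev0 b0), b0, hb0I, hcoe0 b0 hb0, rfl⟩
    have hSbdd : ∃ c : ℤ, ∀ z, S z → c ≤ z := by
      refine ⟨0, ?_⟩
      rintro z ⟨ψ, -, hψ0, rfl⟩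
      exact hval_nonneg ψ hψ0
    obtain ⟨lb, ⟨a, haI, ha0, halb⟩, hmin⟩ := Int.exists_least_of_bdd hSbdd hSne
    have ha0coe : (a : RatFunc ℚ) ≠ 0 := ha0
    have hevane : ev0 (a : RatFunc ℚ) ≠ 0 := hev_ne a ha0
    refine ⟨⟨a, le_antisymm ?_ ?_⟩⟩
    · intro b hb
      rcases eq_or_ne b 0 with rfl | hbne
      · exact Ideal.zero_mem _
      have hbcoe : (b : RatFunc ℚ) ≠ 0 := hcoe0 b hbne
      have hevbne : ev0 (b : RatFunc ℚ) ≠ 0 := hev_ne b hbcoe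
      set q : RatFunc ℚ := (b : RatFunc ℚ) / (a : RatFunc ℚ) with hq
      have hq0 : q ≠ 0 := div_ne_zero hbcoe ha0coe
      have hevqne : ev0 q ≠ 0 := fun h => hq0 (hev0inj (by rwa [map_zero]))
      have hfac : (b : RatFunc ℚ) = q * (a : RatFunc ℚ) := (div_mul_cancel₀ _ ha0coe).symm
      have hνb : ν (ev0 (b : RatFunc ℚ)) = ν (ev0 q) + ν (ev0 (a : RatFunc ℚ)) := by
        rw [hfac, map_mul]
        exact hνmul _ _ hevqne hevane
      have hblb : lb ≤ ν (ev0 (b : RatFunc ℚ)) := hmin _ ⟨b, hb, hbcoe, rfl⟩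
      have hq_nonneg : 0 ≤ ν (ev0 q) := by omega
      have hqW : q ∈ W := (hmemW q).mpr ((hint_iff _ hevqne).mpr hq_nonneg)
      refine Ideal.mem_span_singleton.mpr ⟨⟨q, hqW⟩, ?_⟩
      apply Subtype.ext
      show (b : RatFunc ℚ) = (a : RatFunc ℚ) * q
      rw [hfac, mul_comm]
    · exact (Ideal.span_singleton_le_iff_mem _).mpr haI
  -- not a field
  haveI : CharZero (RatFunc ℚ) :=
    charZero_of_injective_algebraMap (algebraMap ℚ (RatFunc ℚ)).injective
  have hp := (Fact.out : p.Prime)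
  set n := Module.finrank ℚ_[p] K with hn
  have hnpos : 0 < n := Module.finrank_pos
  have hπ : ev0 ((p : ℕ) : RatFunc ℚ) = ((p : ℕ) : K) := by rw [map_natCast]
  have hpK : ((p : ℕ) : K) = algebraMap ℚ_[p] K ((p : ℕ) : ℚ_[p]) := by rw [map_natCast]
  have hNmp : Algebra.norm ℚ_[p] ((p : ℕ) : K) = ((p : ℚ_[p])) ^ n := by
    rw [hpK, Algebra.norm_algebraMap, hn]
  have hpKne : ((p : ℕ) : K) ≠ 0 := Nat.cast_ne_zero.mpr hp.ne_zero
  have hp_norm : ‖Algebra.norm ℚ_[p] ((p : ℕ) : K)‖ ≤ 1 := by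
    rw [hNmp, norm_pow, Padic.norm_p]
    refine pow_le_one₀ (by positivity) ?_
    refine inv_le_one_of_one_le₀ ?_
    exact_mod_cast hp.one_le
  have hmemπ : ((p : ℕ) : RatFunc ℚ) ∈ W := by
    rw [hmemW, hπ]
    exact Stmt2Aux.isIntegral_of_norm_le_one hp_norm
  set piW : W := ⟨((p : ℕ) : RatFunc ℚ), hmemπ⟩ with hpiW
  have hpiW0 : piW ≠ 0 := by
    intro h
    have : ((p : ℕ) : RatFunc ℚ) = 0 := congrArg Subtype.val h
    exact hp.ne_zero (Nat.cast_eq_zero.mp this)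
  have hpiWnu : ¬ IsUnit piW := by
    intro h
    obtain ⟨u, hu⟩ := h
    have hinv : (((u⁻¹ : Wˣ) : W) : RatFunc ℚ) * ((p : ℕ) : RatFunc ℚ) = 1 := by
      have h1 : ((u⁻¹ : Wˣ) : W) * piW = 1 := by
        rw [← hu]
        exact_mod_cast u.inv_mul
      have := congrArg (Subtype.val) h1
      exact this
    have hq : (((u⁻¹ : Wˣ) : W) : RatFunc ℚ) = (((p : ℕ) : RatFunc ℚ))⁻¹ :=
      eq_inv_of_mul_eq_one_left hinv
    have hWmem : (((p : ℕ) : RatFunc ℚ))⁻¹ ∈ W := hq ▸ ((u⁻¹ : Wˣ) : W).2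
    have hint : IsIntegral ℤ_[p] (ev0 (((p : ℕ) : RatFunc ℚ))⁻¹) := (hmemW _).mpr hWmem
    rw [map_inv₀, hπ] at hint
    have hle := (Stmt2Aux.integral_iff_norm_le_one _).mp hint
    have hinvNm : Algebra.norm ℚ_[p] (((p : ℕ) : K))⁻¹ = (Algebra.norm ℚ_[p] ((p : ℕ) : K))⁻¹ := by
      refine eq_inv_of_mul_eq_one_left ?_
      rw [← map_mul, inv_mul_cancel₀ hpKne, map_one]
    rw [hinvNm, norm_inv, hNmp, norm_pow, Padic.norm_p] at hle
    have hcontra : (1 : ℝ) < (((p : ℝ))⁻¹ ^ n)⁻¹ := by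
      rw [inv_pow, inv_inv]
      refine one_lt_pow₀ ?_ (by omega)
      exact_mod_cast hp.one_lt
    linarith
  have hnf : IsLocalRing.maximalIdeal W ≠ ⊥ := by
    have hmm : piW ∈ IsLocalRing.maximalIdeal W := by
      rw [IsLocalRing.mem_maximalIdeal]
      exact hpiWnu
    intro hbot
    rw [hbot] at hmm
    exact hpiW0 ((Submodule.mem_bot _).mp hmm)
  exact ⟨hnf⟩
end

section
/- Let p be a prime and α an element of the ring of integers of a finite extension of Q_p, transcendental over Q. The value group of the valuation w(φ) = v_p(φ(α)) on Q(X) equals (1/e)·Z, where e is the ramification index of Q_p(α) over Q_p; in particular the ramification index of V_{p,α} over Z_(p) equals e. -/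
open IntermediateField

/-- For a prime `p` and `α` integral over `ℤ_[p]`, transcendental over `ℚ`, the value group of
the valuation `w(φ) = v_p(φ(α))` on `ℚ(X)` equals `(1/e)·ℤ`, where `e` is the ramification
index of `ℚ_p(α)` over `ℚ_p`; in particular the ramification index of `V_{p,α}` over `ℤ_(p)`
equals `e`.  Here `v` is the unique extension of the `p`-adic valuation (with `v(p) = 1`) to
the algebraic closure of `ℚ_p`, and the ramification index `e` is encoded by the hypothesis
that the value group `v(ℚ_p(α)^*)` equals `(1/e)·ℤ`. -/
theorem stmt3 (p : ℕ) [Fact p.Prime]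
    (v : AlgebraicClosure ℚ_[p] → ℚ)
    (hvmul : ∀ x y : AlgebraicClosure ℚ_[p], x ≠ 0 → y ≠ 0 → v (x * y) = v x + v y)
    (hvadd : ∀ x y : AlgebraicClosure ℚ_[p],
      x ≠ 0 → y ≠ 0 → x + y ≠ 0 → min (v x) (v y) ≤ v (x + y))
    (hvint : ∀ x : AlgebraicClosure ℚ_[p], x ≠ 0 → (IsIntegral ℤ_[p] x ↔ 0 ≤ v x))
    (hvp : v (algebraMap ℚ_[p] (AlgebraicClosure ℚ_[p]) (p : ℚ_[p])) = 1)
    (α : AlgebraicClosure ℚ_[p]) (hαint : IsIntegral ℤ_[p] α) (hαtr : Transcendental ℚ α)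
    (e : ℕ) (he : 0 < e)
    (hram : {q : ℚ | ∃ x : AlgebraicClosure ℚ_[p], x ∈ ℚ_[p]⟮α⟯ ∧ x ≠ 0 ∧ v x = q}
      = {q : ℚ | ∃ k : ℤ, q = (k : ℚ) / e}) :
    {q : ℚ | ∃ φ : RatFunc ℚ, φ ≠ 0 ∧
        v (RatFunc.eval (algebraMap ℚ (AlgebraicClosure ℚ_[p])) α φ) = q}
      = {q : ℚ | ∃ k : ℤ, q = (k : ℚ) / e} := by
  have hp : p ≠ 0 := (Fact.out : p.Prime).ne_zero
  -- basic facts about v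
  have v1 : v 1 = 0 := by
    have h := hvmul 1 1 one_ne_zero one_ne_zero
    rw [one_mul] at h; linarith
  have vneg1 : v (-1 : (AlgebraicClosure ℚ_[p])) = 0 := by
    have h := hvmul (-1 : (AlgebraicClosure ℚ_[p])) (-1) (by norm_num) (by norm_num)
    rw [neg_mul_neg, one_mul, v1] at h; linarith
  have vneg : ∀ x : (AlgebraicClosure ℚ_[p]), x ≠ 0 → v (-x) = v x := by
    intro x hx
    have h := hvmul (-1 : (AlgebraicClosure ℚ_[p])) x (by norm_num) hx
    rw [neg_one_mul, vneg1] at h; linarith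
  have vclose : ∀ x y : (AlgebraicClosure ℚ_[p]), x ≠ 0 → y ≠ 0 → x ≠ y → v x < v (x - y) → v y = v x := by
    intro x y hx hy hne hlt
    have hxy : x - y ≠ 0 := sub_ne_zero.mpr hne
    have hyx : y - x ≠ 0 := sub_ne_zero.mpr (Ne.symm hne)
    have hvyx : v (y - x) = v (x - y) := by
      rw [← vneg (x - y) hxy]; congr 1; ring
    have h1 : v x ≤ v y := by
      have h := hvadd x (y - x) hx hyx (by rw [add_sub_cancel]; exact hy)
      rw [add_sub_cancel] at h
      have : v x ≤ v (y - x) := by rw [hvyx]; exact le_of_lt hlt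
      calc v x = min (v x) (v (y - x)) := (min_eq_left this).symm
        _ ≤ v y := h
    have h2 : v y ≤ v x := by
      by_contra hc
      push_neg at hc
      have h := hvadd y (x - y) hy hxy (by rw [add_sub_cancel]; exact hx)
      rw [add_sub_cancel] at h
      have : v x < min (v y) (v (x - y)) := lt_min hc hlt
      linarith
    linarith
  set π : (AlgebraicClosure ℚ_[p]) := algebraMap ℚ_[p] (AlgebraicClosure ℚ_[p]) (p : ℚ_[p]) with hπdef
  have hπ0 : π ≠ 0 := by
    simp only [hπdef, ne_eq, map_eq_zero, Nat.cast_eq_zero]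
    exact hp
  have vpow : ∀ (n : ℕ) (z : (AlgebraicClosure ℚ_[p])), z ≠ 0 → v (π ^ n * z) = n + v z := by
    intro n
    induction n with
    | zero => intro z hz; simp
    | succ n ih =>
      intro z hz
      have h1 : π ^ (n + 1) * z = π * (π ^ n * z) := by ring
      rw [h1, hvmul π (π ^ n * z) hπ0 (mul_ne_zero (pow_ne_zero _ hπ0) hz), hvp, ih z hz]
      push_cast; ring
  -- membership of rational polynomial evaluations
  have memK : ∀ g : Polynomial ℚ, Polynomial.aeval α g ∈ ℚ_[p]⟮α⟯ := by
    intro g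
    rw [← Polynomial.aeval_map_algebraMap ℚ_[p]]
    have h1 : Polynomial.aeval α (g.map (algebraMap ℚ ℚ_[p])) ∈ Algebra.adjoin ℚ_[p] {α} :=
      Polynomial.aeval_mem_adjoin_singleton _ _
    rw [← IntermediateField.mem_toSubalgebra]
    exact IntermediateField.algebra_adjoin_le_adjoin ℚ_[p] {α} h1
  have halg : IsIntegral ℚ_[p] α := hαint.tower_top
  -- the key approximation lemma
  have key : ∀ x : (AlgebraicClosure ℚ_[p]), x ∈ ℚ_[p]⟮α⟯ → x ≠ 0 →
      ∃ g : Polynomial ℚ, Polynomial.aeval α g ≠ 0 ∧ v (Polynomial.aeval α g) = v x := by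
    intro x hxK hx0
    -- write x as a ℚ_p-polynomial in α
    have hxK' : x ∈ Algebra.adjoin ℚ_[p] {α} := by
      rw [← IntermediateField.mem_toSubalgebra,
        IntermediateField.adjoin_simple_toSubalgebra_of_isAlgebraic halg.isAlgebraic] at hxK
      exact hxK
    rw [Algebra.adjoin_singleton_eq_range_aeval] at hxK'
    obtain ⟨g0, hg0⟩ := hxK'
    set n : ℕ := g0.natDegree with hndef
    set N : ℕ := (⌈v x⌉).toNat + 1 with hNdef
    have hN : v x < (N : ℚ) := by
      have h1 : v x ≤ (⌈v x⌉ : ℚ) := Int.le_ceil _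
      have h2 : (⌈v x⌉ : ℚ) ≤ ((⌈v x⌉.toNat : ℤ) : ℚ) := by
        exact_mod_cast Int.self_le_toNat _
      have h3 : ((⌈v x⌉.toNat : ℤ) : ℚ) < (N : ℚ) := by
        rw [hNdef]; push_cast; linarith
      linarith
    -- choose rational approximations of the coefficients
    have happrox : ∀ i : ℕ, ∃ r : ℚ, ‖g0.coeff i - (r : ℚ_[p])‖ < (p : ℝ) ^ (-(N : ℤ)) := by
      intro i
      exact Padic.rat_dense p (g0.coeff i) (zpow_pos (by exact_mod_cast (Fact.out : p.Prime).pos) _)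
    choose r hr using happrox
    set gq : Polynomial ℚ := ∑ i ∈ Finset.range (n + 1), Polynomial.monomial i (r i) with hgqdef
    set y : (AlgebraicClosure ℚ_[p]) := Polynomial.aeval α gq with hydef
    -- the difference polynomial
    set h : Polynomial ℚ_[p] := g0 - gq.map (algebraMap ℚ ℚ_[p]) with hhdef
    have hg0' : Polynomial.aeval α g0 = x := hg0
    have hxy : x - y = Polynomial.aeval α h := by
      rw [hhdef, map_sub, hg0', hydef, Polynomial.aeval_map_algebraMap]
    have hgqcoeff0 : ∀ i : ℕ, gq.coeff i = if i ∈ Finset.range (n + 1) then r i else 0 := by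
      intro i
      rw [hgqdef, Polynomial.finset_sum_coeff]
      simp only [Polynomial.coeff_monomial]
      exact Finset.sum_ite_eq' (Finset.range (n + 1)) i r
    have hgqcoeff : ∀ i : ℕ, (gq.map (algebraMap ℚ ℚ_[p])).coeff i =
        if i ∈ Finset.range (n + 1) then ((r i : ℚ_[p])) else 0 := by
      intro i
      rw [Polynomial.coeff_map, hgqcoeff0 i, apply_ite (algebraMap ℚ ℚ_[p]), map_zero,
        eq_ratCast (algebraMap ℚ ℚ_[p]) (r i)]
    have hhcoeff : ∀ i : ℕ, ‖h.coeff i‖ ≤ (p : ℝ) ^ (-(N : ℤ)) := by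
      intro i
      rw [hhdef, Polynomial.coeff_sub, hgqcoeff i]
      by_cases hi : i ∈ Finset.range (n + 1)
      · rw [if_pos hi]
        exact le_of_lt (hr i)
      · rw [if_neg hi]
        have h1 : ¬ i < n + 1 := by simpa [Finset.mem_range] using hi
        have : g0.coeff i = 0 := by
          apply Polynomial.coeff_eq_zero_of_natDegree_lt
          omega
        rw [this, sub_zero, norm_zero]
        positivity
    -- factor out p^N
    have hpN : ((p : ℚ_[p]) ^ N) ≠ 0 := pow_ne_zero _ (by exact_mod_cast hp)
    set h₂ : Polynomial ℚ_[p] := Polynomial.C (((p : ℚ_[p]) ^ N)⁻¹) * h with hh2def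
    have hfact : h = Polynomial.C ((p : ℚ_[p]) ^ N) * h₂ := by
      rw [hh2def, ← mul_assoc, ← Polynomial.C_mul, mul_inv_cancel₀ hpN, Polynomial.C_1, one_mul]
    set z : (AlgebraicClosure ℚ_[p]) := Polynomial.aeval α h₂ with hzdef
    have hxyz : x - y = π ^ N * z := by
      rw [hxy, hfact, map_mul, Polynomial.aeval_C, hzdef, hπdef, ← map_pow]
    -- z is integral over ℤ_[p]
    have hzint : IsIntegral ℤ_[p] z := by
      have hmem : z ∈ integralClosure ℤ_[p] (AlgebraicClosure ℚ_[p]) := by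
        rw [hzdef, Polynomial.aeval_eq_sum_range]
        apply Subalgebra.sum_mem
        intro i _
        rw [Algebra.smul_def]
        apply mul_mem
        · -- the coefficient is in ℤ_[p]
          have hcoeff : ‖h₂.coeff i‖ ≤ 1 := by
            rw [hh2def, Polynomial.coeff_C_mul, norm_mul, norm_inv, norm_pow,
              Padic.norm_p, inv_pow, inv_inv]
            calc (p : ℝ) ^ N * ‖h.coeff i‖
                ≤ (p : ℝ) ^ N * (p : ℝ) ^ (-(N : ℤ)) :=
                  mul_le_mul_of_nonneg_left (hhcoeff i) (by positivity)
              _ = 1 := by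
                  rw [← zpow_natCast (p : ℝ) N,
                    ← zpow_add₀ (by exact_mod_cast hp : (p : ℝ) ≠ 0)]
                  simp
          set u : ℤ_[p] := ⟨h₂.coeff i, hcoeff⟩ with hudef
          have : algebraMap ℚ_[p] (AlgebraicClosure ℚ_[p]) (h₂.coeff i) = algebraMap ℤ_[p] (AlgebraicClosure ℚ_[p]) u := by
            rw [IsScalarTower.algebraMap_apply ℤ_[p] ℚ_[p] (AlgebraicClosure ℚ_[p])]
            rfl
          rw [this]
          exact Subalgebra.algebraMap_mem _ u
        · exact pow_mem hαint i
      exact hmem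
    by_cases hxeqy : x = y
    · exact ⟨gq, by rw [← hydef, ← hxeqy]; exact hx0, by rw [← hydef, ← hxeqy]⟩
    · have hz0 : z ≠ 0 := by
        intro hz
        apply hxeqy
        have := hxyz
        rw [hz, mul_zero, sub_eq_zero] at this
        exact this
      have hvz : 0 ≤ v z := (hvint z hz0).mp hzint
      have hvxy : (N : ℚ) ≤ v (x - y) := by
        rw [hxyz, vpow N z hz0]; linarith
      have hy0 : y ≠ 0 := by
        intro hy
        rw [hy, sub_zero] at hvxy
        linarith
      have := vclose x y hx0 hy0 hxeqy (by linarith)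
      exact ⟨gq, by rw [← hydef]; exact hy0, by rw [← hydef, this]⟩
  -- now the main proof
  ext q
  simp only [Set.mem_setOf_eq]
  constructor
  · rintro ⟨φ, hφ0, rfl⟩
    -- forward direction: the value is in (1/e)ℤ
    have hnum0 : φ.num ≠ 0 := RatFunc.num_ne_zero hφ0
    have hden0 : φ.denom ≠ 0 := φ.denom_ne_zero
    set a : (AlgebraicClosure ℚ_[p]) := Polynomial.aeval α φ.num with hadef
    set b : (AlgebraicClosure ℚ_[p]) := Polynomial.aeval α φ.denom with hbdef
    have ha0 : a ≠ 0 := fun hc => hnum0 (transcendental_iff.mp hαtr _ hc)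
    have hb0 : b ≠ 0 := fun hc => hden0 (transcendental_iff.mp hαtr _ hc)
    have heval : RatFunc.eval (algebraMap ℚ (AlgebraicClosure ℚ_[p])) α φ = a / b := by
      rw [RatFunc.eval]; rfl
    have hmema : v a ∈ {q : ℚ | ∃ k : ℤ, q = (k : ℚ) / e} := by
      rw [← hram]; exact ⟨a, memK _, ha0, rfl⟩
    have hmemb : v b ∈ {q : ℚ | ∃ k : ℤ, q = (k : ℚ) / e} := by
      rw [← hram]; exact ⟨b, memK _, hb0, rfl⟩
    obtain ⟨k1, hk1⟩ := hmema
    obtain ⟨k2, hk2⟩ := hmemb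
    have hab0 : a / b ≠ 0 := div_ne_zero ha0 hb0
    have hdiv : v (a / b) = v a - v b := by
      have h := hvmul (a / b) b hab0 hb0
      rw [div_mul_cancel₀ a hb0] at h
      linarith
    refine ⟨k1 - k2, ?_⟩
    rw [heval, hdiv, hk1, hk2]
    push_cast
    ring
  · rintro ⟨k, rfl⟩
    have hmem : ((k : ℚ) / e) ∈ {q : ℚ | ∃ x : (AlgebraicClosure ℚ_[p]), x ∈ ℚ_[p]⟮α⟯ ∧ x ≠ 0 ∧ v x = q} := by
      rw [hram]; exact ⟨k, rfl⟩
    obtain ⟨x, hxK, hx0, hvx⟩ := hmem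
    obtain ⟨g, hg0, hvg⟩ := key x hxK hx0
    have hgne : g ≠ 0 := fun hc => hg0 (by rw [hc, map_zero])
    refine ⟨algebraMap (Polynomial ℚ) (RatFunc ℚ) g, RatFunc.algebraMap_ne_zero hgne, ?_⟩
    rw [RatFunc.eval_algebraMap]
    have : (algebraMap (Polynomial ℚ) (Polynomial ℚ) g) = g := rfl
    rw [this]
    rw [show Polynomial.eval₂ (algebraMap ℚ (AlgebraicClosure ℚ_[p])) α g = Polynomial.aeval α g from rfl]
    rw [hvg, hvx]
end

section
/- Let R_p = {f ∈ Q[X] : f(E_p) ⊆ O_K} where E_p is a subset of the ring of integers O_K of a finite extension K of Q_p. Then every prime ideal M' of R_p containing p is maximal with finite residue field. -/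
open Polynomial

/-- Periodicity of powers: if `x ^ a = x ^ b` with `a < b`, then powers are
periodic from index `a` on, with period `b - a`. -/
private lemma pow_eventually_periodic {A : Type*} [Monoid A] {x : A} {a b : ℕ}
    (hab : a < b) (h : x ^ a = x ^ b) :
    ∀ k t, x ^ (a + t + k * (b - a)) = x ^ (a + t) := by
  intro k
  induction k with
  | zero => intro t; simp
  | succ k ih =>
    intro t
    have e1 : a + t + (k + 1) * (b - a) = a + (t + (b - a)) + k * (b - a) := by
      rw [add_mul, one_mul]; omega
    rw [e1, ih (t + (b - a))]
    have e2 : a + (t + (b - a)) = t + b := by omega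
    rw [e2, pow_add, ← h, ← pow_add]
    congr 1
    omega

/-- In a finite monoid there are uniform exponents `1 ≤ m < n` with `x ^ n = x ^ m`
for every `x`. -/
private lemma exists_uniform_pow (A : Type*) [Monoid A] [Finite A] :
    ∃ m n : ℕ, 1 ≤ m ∧ m < n ∧ ∀ x : A, x ^ n = x ^ m := by
  haveI := Fintype.ofFinite A
  set N := Fintype.card A with hN
  have hNpos : 0 < N := Fintype.card_pos
  refine ⟨N.factorial, 2 * N.factorial, N.factorial_pos, by
    have := N.factorial_pos; omega, ?_⟩
  intro x
  -- find a repetition among x^1, ..., x^(N+1)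
  obtain ⟨i, j, hij, hrep⟩ :
      ∃ i j : Fin (N + 1), i ≠ j ∧ x ^ ((i : ℕ) + 1) = x ^ ((j : ℕ) + 1) := by
    have hcard : Fintype.card A < Fintype.card (Fin (N + 1)) := by
      simp [hN]
    obtain ⟨i, j, hij, h⟩ :=
      Fintype.exists_ne_map_eq_of_card_lt (fun i : Fin (N + 1) => x ^ ((i : ℕ) + 1)) hcard
    exact ⟨i, j, hij, h⟩
  -- wlog i < j
  obtain ⟨a, b, hab, hle, hrep'⟩ :
      ∃ a b : ℕ, a < b ∧ b ≤ N + 1 ∧ 1 ≤ a ∧ x ^ a = x ^ b := by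
    rcases lt_or_gt_of_ne (fun h : (i : ℕ) = (j : ℕ) => hij (Fin.ext h)) with h | h
    · exact ⟨(i : ℕ) + 1, (j : ℕ) + 1, by omega, by omega, by omega, hrep⟩
    · exact ⟨(j : ℕ) + 1, (i : ℕ) + 1, by omega, by omega, by omega, hrep.symm⟩
  obtain ⟨h1a, hxab⟩ := hrep'
  set d := b - a with hd
  have hdpos : 0 < d := by omega
  have hdle : d ≤ N := by omega
  have hdvd : d ∣ N.factorial := Nat.dvd_factorial hdpos hdle
  obtain ⟨k, hk⟩ := hdvd
  have haN : a ≤ N.factorial := le_trans (by omega) (Nat.self_le_factorial N)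
  have key := pow_eventually_periodic hab hxab k (N.factorial - a)
  have hk' : k * d = N.factorial := by rw [mul_comm]; exact hk.symm
  have e1 : a + (N.factorial - a) + k * d = 2 * N.factorial := by omega
  have e2 : a + (N.factorial - a) = N.factorial := by omega
  rw [e1, e2] at key
  exact key

/-- Quotients of `ℤ_[p]` by nonzero principal ideals are finite. -/
private lemma padic_quot_finite {p : ℕ} [Fact p.Prime] {c : ℤ_[p]} (hc : c ≠ 0) :
    Finite (ℤ_[p] ⧸ Ideal.span {c}) := by
  set k := c.valuation with hk
  have hassoc : Associated ((p : ℤ_[p]) ^ k) c := by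
    refine ⟨PadicInt.unitCoeff hc, ?_⟩
    rw [mul_comm]
    exact (PadicInt.unitCoeff_spec hc).symm
  have hspan : Ideal.span {c} = Ideal.span {(p : ℤ_[p]) ^ k} :=
    (Ideal.span_singleton_eq_span_singleton.mpr hassoc).symm
  rw [hspan, ← PadicInt.ker_toZModPow k]
  haveI : NeZero (p ^ k) :=
    ⟨pow_ne_zero _ (Fact.out : p.Prime).ne_zero⟩
  exact Finite.of_injective _ (RingHom.kerLift_injective (PadicInt.toZModPow k))

set_option maxHeartbeats 1000000 in
set_option synthInstance.maxHeartbeats 400000 in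
/-- Let `R_p = {f ∈ ℚ[X] : f(E_p) ⊆ O_K}` where `E_p` is a subset of the ring of integers
`O_K = integralClosure ℤ_[p] K` of a finite extension `K` of `ℚ_p`.  Then every prime ideal
`M'` of `R_p` containing `p` is maximal with finite residue field. -/
theorem stmt7 (p : ℕ) [Fact p.Prime]
    (K : Type*) [Field K] [Algebra ℚ_[p] K] [FiniteDimensional ℚ_[p] K]
    [Algebra ℤ_[p] K] [IsScalarTower ℤ_[p] ℚ_[p] K] [CharZero K]
    (E : Set K) (hE : ∀ α ∈ E, IsIntegral ℤ_[p] α)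
    (Rp : Subring (Polynomial ℚ))
    (hRp : ∀ f : Polynomial ℚ,
      f ∈ Rp ↔ ∀ α ∈ E, Polynomial.aeval α f ∈ integralClosure ℤ_[p] K)
    (M : Ideal Rp) (hM : M.IsPrime) (hpM : ((p : ℕ) : Rp) ∈ M) :
    M.IsMaximal ∧ Finite (Rp ⧸ M) := by
  haveI := hM
  have hp : p.Prime := Fact.out
  have hpK : ((p : ℕ) : K) ≠ 0 := Nat.cast_ne_zero.mpr hp.ne_zero
  set O := integralClosure ℤ_[p] K with hO
  -- `O` is module-finite and free over `ℤ_[p]`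
  have hinj : Function.Injective (algebraMap ℤ_[p] K) := by
    rw [IsScalarTower.algebraMap_eq ℤ_[p] ℚ_[p] K]
    exact (algebraMap ℚ_[p] K).injective.comp (IsFractionRing.injective ℤ_[p] ℚ_[p])
  haveI : Module.IsTorsionFree ℤ_[p] K := NoZeroSMulDivisors.iff_algebraMap_injective.mpr hinj
  haveI : Module.Finite ℤ_[p] O := IsIntegralClosure.finite ℤ_[p] ℚ_[p] K O
  haveI : Module.Free ℤ_[p] O := IsIntegralClosure.module_free ℤ_[p] ℚ_[p] K O
  -- `O ⧸ (p)` is finite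
  have hpO : ((p : ℕ) : O) ≠ 0 := by
    intro h
    apply hpK
    have := congrArg (fun x : O => (x : K)) h
    simpa using this
  have hIbot : (Ideal.span {((p : ℕ) : O)} : Ideal O) ≠ ⊥ := by
    rw [Ne, Ideal.span_singleton_eq_bot]
    exact hpO
  set I : Ideal O := Ideal.span {((p : ℕ) : O)} with hI
  haveI : Finite (O ⧸ I) := by
    let b := Module.Free.chooseBasis ℤ_[p] O
    let e := Ideal.quotientEquivPiSpan I b hIbot
    haveI : ∀ i, Finite (ℤ_[p] ⧸ Ideal.span {I.smithCoeffs b hIbot i}) := fun i =>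
      padic_quot_finite (Ideal.smithCoeffs_ne_zero b I hIbot i)
    exact Finite.of_equiv _ e.symm.toEquiv
  -- uniform exponents
  obtain ⟨m, n, hm1, hmn, hpow⟩ := exists_uniform_pow (O ⧸ I)
  -- key step: for every `x : Rp`, `x ^ n - x ^ m ∈ M`
  have hkey : ∀ x : Rp, x ^ n - x ^ m ∈ M := by
    intro x
    set f : Polynomial ℚ := (x : Polynomial ℚ) with hf
    set g : Polynomial ℚ := Polynomial.C ((p : ℚ))⁻¹ * (f ^ n - f ^ m) with hg
    have hgmem : g ∈ Rp := by
      rw [hRp]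
      intro α hα
      have hfα : Polynomial.aeval α f ∈ O := (hRp f).1 x.2 α hα
      set y : O := ⟨Polynomial.aeval α f, hfα⟩ with hy
      have hyq : (Ideal.Quotient.mk I) (y ^ n - y ^ m) = 0 := by
        rw [map_sub, map_pow, map_pow, hpow, sub_self]
      have hymem : y ^ n - y ^ m ∈ I := Ideal.Quotient.eq_zero_iff_mem.mp hyq
      obtain ⟨z, hz⟩ := Ideal.mem_span_singleton.mp hymem
      -- compute the value of `g` at `α`
      have hval : Polynomial.aeval α g = (z : K) := by
        have hcoe : ((y ^ n - y ^ m : O) : K) = (Polynomial.aeval α f) ^ n -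
            (Polynomial.aeval α f) ^ m := by push_cast [hy]; ring
        have hz' : (Polynomial.aeval α f) ^ n - (Polynomial.aeval α f) ^ m
            = ((p : ℕ) : K) * (z : K) := by
          rw [← hcoe, hz]; push_cast; ring
        rw [hg, map_mul, Polynomial.aeval_C, map_sub, map_pow, map_pow, hz']
        rw [map_inv₀, map_natCast]
        field_simp
      rw [hval]
      exact z.2
    have hx : x ^ n - x ^ m = ((p : ℕ) : Rp) * ⟨g, hgmem⟩ := by
      apply Subtype.ext
      push_cast [hg]
      rw [← mul_assoc, ← Polynomial.C_eq_natCast, ← Polynomial.C_mul]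
      rw [mul_inv_cancel₀ (by exact_mod_cast hp.ne_zero : (p : ℚ) ≠ 0)]
      simp [hf]
    rw [hx]
    exact Ideal.mul_mem_right _ _ hpM
  -- the quotient is a domain in which every element satisfies `ξ ^ n = ξ ^ m`
  have hquot : ∀ ξ : Rp ⧸ M, ξ ^ n = ξ ^ m := by
    intro ξ
    obtain ⟨x, rfl⟩ := Ideal.Quotient.mk_surjective ξ
    have : (Ideal.Quotient.mk M) (x ^ n - x ^ m) = 0 :=
      Ideal.Quotient.eq_zero_iff_mem.mpr (hkey x)
    rw [map_sub, map_pow, map_pow, sub_eq_zero] at this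
    exact this
  -- finiteness of the quotient
  set d := n - m with hdnm
  have hd0 : d ≠ 0 := by omega
  have hfin : Finite (Rp ⧸ M) := by
    have hpoly : (X ^ d - C (1 : Rp ⧸ M)) ≠ 0 :=
      (Polynomial.monic_X_pow_sub_C (1 : Rp ⧸ M) hd0).ne_zero
    have hsub : (Set.univ : Set (Rp ⧸ M)) ⊆
        {0} ∪ {ξ : Rp ⧸ M | (X ^ d - C (1 : Rp ⧸ M)).IsRoot ξ} := by
      intro ξ _
      have h1 : ξ ^ m * (ξ ^ d - 1) = 0 := by
        rw [mul_sub, mul_one, ← pow_add]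
        have : m + d = n := by omega
        rw [this, hquot ξ, sub_self]
      rcases mul_eq_zero.mp h1 with h2 | h2
      · left
        simp only [Set.mem_singleton_iff]
        exact (pow_eq_zero_iff (by omega : m ≠ 0)).mp h2
      · right
        simp only [Set.mem_setOf_eq, Polynomial.IsRoot, Polynomial.eval_sub,
          Polynomial.eval_pow, Polynomial.eval_X, Polynomial.eval_C]
        exact h2
    have : (Set.univ : Set (Rp ⧸ M)).Finite :=
      Set.Finite.subset ((Set.finite_singleton 0).union
        (Polynomial.finite_setOf_isRoot hpoly)) hsub
    exact Set.finite_univ_iff.mp this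
  haveI := hfin
  have hfield : IsField (Rp ⧸ M) := Finite.isField_of_domain _
  exact ⟨Ideal.Quotient.maximal_of_isField M hfield, hfin⟩
end

section
/- Let S be a multiplicative subset of Z generated by the primes outside a finite set P, and for each prime p let R_p ⊆ Q[X] be a subring containing Z[X] such that R_p contains 1/t for every integer t not divisible by p, and such that R = ⋂_p R_p with R_q ⊇ Z_(q)[X] for q ∉ P. Then S^{-1}R = ⋂_{p∈P} R_p. (Concretely: with R = Int_Q(Ē, Ẑ-bar) and R_p = Int_Q(E_p, Z_p-bar), S^{-1}R = ⋂_{p∈P} Int_Q(E_p, Z_p-bar).) -/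
open Polynomial

lemma aux_smul (p : ℕ) [Fact p.Prime] (c : ℚ) (hc : ‖(c : ℚ_[p])‖ ≤ 1)
    (x : AlgebraicClosure ℚ_[p]) (hx : IsIntegral ℤ_[p] x) :
    IsIntegral ℤ_[p] (c • x) := by
  have key : algebraMap ℚ (AlgebraicClosure ℚ_[p]) c =
      algebraMap ℤ_[p] _ (Subtype.mk (c : ℚ_[p]) hc : ℤ_[p]) := by
    erw [IsScalarTower.algebraMap_apply ℤ_[p] ℚ_[p] (AlgebraicClosure ℚ_[p])]
    have h2 : (algebraMap ℚ (AlgebraicClosure ℚ_[p])) =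
        (algebraMap ℚ_[p] (AlgebraicClosure ℚ_[p])).comp (algebraMap ℚ ℚ_[p]) :=
      Subsingleton.elim _ _
    rw [h2]; rfl
  rw [Algebra.smul_def, key]
  exact (isIntegral_algebraMap).mul hx

lemma aux_int (p : ℕ) [Fact p.Prime] (α : AlgebraicClosure ℚ_[p]) (hα : IsIntegral ℤ_[p] α)
    (g : ℚ[X]) (hg : ∀ i, ‖((g.coeff i : ℚ) : ℚ_[p])‖ ≤ 1) :
    IsIntegral ℤ_[p] (aeval α g) := by
  rw [aeval_eq_sum_range]
  apply IsIntegral.sum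
  intro i _
  exact aux_smul p _ (hg i) _ (hα.pow i)

lemma aux_norm_one (p : ℕ) [hp : Fact p.Prime] (m : ℤ) (h : ¬ (p:ℤ) ∣ m) :
    ‖(m : ℚ_[p])‖ = 1 := by
  refine le_antisymm (Padic.norm_int_le_one m) ?_
  by_contra hlt
  push_neg at hlt
  exact h ((Padic.norm_intCast_lt_one_iff (k := m)).mp hlt)

lemma aux_den (g : ℚ[X]) :
    ∃ N : ℕ, 0 < N ∧ ∀ i, ∃ z : ℤ, (N : ℚ) * g.coeff i = z := by
  refine ⟨∏ i ∈ g.support, (g.coeff i).den, Finset.prod_pos fun i _ => (g.coeff i).pos, ?_⟩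
  intro i
  by_cases hi : i ∈ g.support
  · obtain ⟨k, hk⟩ := Finset.dvd_prod_of_mem (fun i => (g.coeff i).den) hi
    refine ⟨(g.coeff i).num * k, ?_⟩
    have h1 : (g.coeff i) * ((g.coeff i).den : ℚ) = (g.coeff i).num := Rat.mul_den_eq_num _
    push_cast [hk]
    linear_combination (k:ℚ) * h1
  · rw [Polynomial.notMem_support_iff.mp hi]
    exact ⟨0, by simp⟩

lemma aux_split (P : Finset ℕ) (N : ℕ) (hN : 0 < N) :
    ∃ m s : ℕ, N = m * s ∧ 0 < s ∧
      (∀ r : ℕ, r.Prime → r ∣ s → r ∉ P) ∧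
      (∀ q : ℕ, q.Prime → q ∉ P → ¬ q ∣ m) := by
  classical
  set F := N.factorization with hF
  refine ⟨∏ p ∈ F.support.filter (· ∈ P), p ^ F p,
         ∏ p ∈ F.support.filter (¬ · ∈ P), p ^ F p, ?_, ?_, ?_, ?_⟩
  · rw [Finset.prod_filter_mul_prod_filter_not F.support (· ∈ P) (fun p => p ^ F p)]
    exact (Nat.factorization_prod_pow_eq_self hN.ne').symm
  · apply Finset.prod_pos
    intro p hp
    have := Nat.prime_of_mem_primeFactors (by simpa [hF, Nat.support_factorization] using (Finset.mem_filter.mp hp).1)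
    exact pow_pos this.pos _
  · intro r hr hdvd hrP
    obtain ⟨q, hq, hdq⟩ := (Nat.Prime.prime hr).exists_mem_finset_dvd hdvd
    have hq' := Finset.mem_filter.mp hq
    have : r = q := (Nat.prime_dvd_prime_iff_eq hr
      (Nat.prime_of_mem_primeFactors (by simpa [hF, Nat.support_factorization] using hq'.1))).mp
      (hr.dvd_of_dvd_pow hdq)
    exact hq'.2 (this ▸ hrP)
  · intro q hq hqP hdvd
    obtain ⟨r, hr, hdr⟩ := (Nat.Prime.prime hq).exists_mem_finset_dvd hdvd
    have hr' := Finset.mem_filter.mp hr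
    have : q = r := (Nat.prime_dvd_prime_iff_eq hq
      (Nat.prime_of_mem_primeFactors (by simpa [hF, Nat.support_factorization] using hr'.1))).mp
      (hq.dvd_of_dvd_pow hdr)
    exact hqP (this ▸ hr'.2)

/-- Let `S` be the multiplicative subset of `ℤ` generated by the primes outside a finite set
`P` of primes.  With `R = Int_ℚ(Ē, Ẑ-bar) = ⋂_p Int_ℚ(E_p, ℤ_p-bar)` (where for each prime `p`,
`E_p` is a subset of the absolute integral closure of `ℤ_p`), one has
`S⁻¹R = ⋂_{p ∈ P} Int_ℚ(E_p, ℤ_p-bar)`. -/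
theorem stmt8 (P : Finset ℕ) (hP : ∀ p ∈ P, p.Prime)
    (E : ∀ (p : ℕ) [Fact p.Prime], Set (AlgebraicClosure ℚ_[p]))
    (hE : ∀ (p : ℕ) [Fact p.Prime], ∀ α ∈ E p, IsIntegral ℤ_[p] α)
    (g : Polynomial ℚ) :
    (∃ (f : Polynomial ℚ) (s : ℤ),
        (∀ (p : ℕ) [Fact p.Prime], ∀ α ∈ E p, IsIntegral ℤ_[p] (Polynomial.aeval α f)) ∧
        0 < s ∧ (∀ r : ℕ, r.Prime → (r : ℤ) ∣ s → r ∉ P) ∧ g = ((s : ℚ))⁻¹ • f)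
      ↔ (∀ p ∈ P, ∀ (_ : Fact p.Prime), ∀ α ∈ E p,
          IsIntegral ℤ_[p] (Polynomial.aeval α g)) := by
  constructor
  · rintro ⟨f, s, hf, hs, hsP, rfl⟩
    intro p hpP hFact α hα
    haveI := hFact
    rw [map_smul]
    apply aux_smul
    · have hnd : ¬ (p:ℤ) ∣ s := fun h => (hsP p (hP p hpP) h) hpP
      have h1 : ‖((s : ℤ) : ℚ_[p])‖ = 1 := aux_norm_one p s hnd
      push_cast
      rw [norm_inv, h1]
      norm_num
    · exact hf p α hα
  · intro hg
    obtain ⟨N, hN, hNden⟩ := aux_den g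
    obtain ⟨m, s, hNms, hs, hsP, hm⟩ := aux_split P N hN
    have hm0 : (m : ℚ) ≠ 0 := by
      have : m ≠ 0 := by
        intro h
        rw [h, zero_mul] at hNms
        omega
      exact_mod_cast this
    refine ⟨(s : ℚ) • g, (s : ℤ), ?_, by exact_mod_cast hs, ?_, ?_⟩
    · intro p hFact α hα
      by_cases hpP : p ∈ P
      · rw [map_smul]
        apply aux_smul
        · have : (((s : ℕ) : ℚ) : ℚ_[p]) = (((s : ℕ) : ℤ) : ℚ_[p]) := by push_cast; ring
          rw [this]
          exact Padic.norm_int_le_one _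
        · exact hg p hpP hFact α hα
      · apply aux_int p α (hE p α hα)
        intro i
        obtain ⟨z, hz⟩ := hNden i
        have hNQ : (N : ℚ) = (m : ℚ) * (s : ℚ) := by exact_mod_cast congrArg (Nat.cast : ℕ → ℚ) hNms
        have hsc : ((s : ℚ) • g).coeff i = (z : ℚ) / (m : ℚ) := by
          rw [Polynomial.coeff_smul, smul_eq_mul, eq_div_iff hm0]
          linear_combination hz - g.coeff i * hNQ
        have hcast : ((((s : ℚ) • g).coeff i : ℚ) : ℚ_[p]) = (z : ℚ_[p]) / ((m : ℤ) : ℚ_[p]) := by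
          rw [hsc]; push_cast; ring
        rw [hcast, norm_div, aux_norm_one p m ?_, div_one]
        · exact Padic.norm_int_le_one _
        · intro hdvd
          exact hm p (Fact.out) hpP (by exact_mod_cast hdvd)
    · intro r hr hdvd
      exact hsP r hr (by exact_mod_cast hdvd)
    · have h1 : ((((s : ℕ) : ℤ) : ℚ))⁻¹ * ((s : ℕ) : ℚ) = 1 := by
        push_cast
        rw [inv_mul_cancel₀]
        exact_mod_cast hs.ne'
      rw [smul_smul, h1, one_smul]
end

section
/- Localization at a prime: for every prime p, (Z \ pZ)^{-1} Int_Q(Ē, Ẑ-bar) = Int_Q(E_p, Z_p-bar), where Ē = ∏_p E_p. -/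
lemma aux_ratcast_integral (r : ℕ) [Fact r.Prime] (q : ℚ) (h : ‖(q : ℚ_[r])‖ ≤ 1) :
    IsIntegral ℤ_[r] (algebraMap ℚ (AlgebraicClosure ℚ_[r]) q) := by
  have : algebraMap ℚ (AlgebraicClosure ℚ_[r]) q
      = algebraMap ℤ_[r] (AlgebraicClosure ℚ_[r]) (show ℤ_[r] from ⟨(q : ℚ_[r]), h⟩) := by
    rw [eq_ratCast, IsScalarTower.algebraMap_apply ℤ_[r] ℚ_[r] (AlgebraicClosure ℚ_[r])]
    rw [show ((algebraMap ℤ_[r] ℚ_[r]) (show ℤ_[r] from ⟨(q : ℚ_[r]), h⟩)) = (q : ℚ_[r]) from rfl]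
    rw [← map_ratCast (algebraMap ℚ_[r] (AlgebraicClosure ℚ_[r])) q]
  rw [this]
  exact isIntegral_algebraMap

lemma aux_aeval_integral (r : ℕ) [Fact r.Prime] (α : AlgebraicClosure ℚ_[r])
    (hα : IsIntegral ℤ_[r] α) (f : Polynomial ℚ)
    (hf : ∀ i, ‖(f.coeff i : ℚ_[r])‖ ≤ 1) :
    IsIntegral ℤ_[r] (Polynomial.aeval α f) := by
  rw [Polynomial.aeval_eq_sum_range]
  refine IsIntegral.sum _ (fun i _ => ?_)
  rw [Algebra.smul_def]
  exact (aux_ratcast_integral r _ (hf i)).mul (hα.pow i)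

lemma aux_norm_one_s9 (r : ℕ) [Fact r.Prime] (n : ℤ) (hn : ¬ (r : ℤ) ∣ n) :
    ‖((n : ℚ) : ℚ_[r])‖ = 1 := by
  have h1 : ((n:ℚ) : ℚ_[r]) = ((n : ℤ) : ℚ_[r]) := by push_cast; ring
  rw [h1]
  refine le_antisymm (Padic.norm_int_le_one n) ?_
  by_contra hlt
  exact hn ((Padic.norm_intCast_lt_one_iff (k := n)).mp (lt_of_not_ge hlt))

set_option maxHeartbeats 1600000 in
/-- Localization at a prime: for every prime `p`,
`(ℤ \ pℤ)⁻¹ Int_ℚ(Ē, Ẑ-bar) = Int_ℚ(E_p, ℤ_p-bar)`, where `Ē = ∏_p E_p` and for each prime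
`p`, `E_p` is a subset of the absolute integral closure of `ℤ_p`. -/
theorem stmt9 (E : ∀ (p : ℕ) [Fact p.Prime], Set (AlgebraicClosure ℚ_[p]))
    (hE : ∀ (p : ℕ) [Fact p.Prime], ∀ α ∈ E p, IsIntegral ℤ_[p] α)
    (p : ℕ) [Fact p.Prime] (g : Polynomial ℚ) :
    (∃ (f : Polynomial ℚ) (s : ℤ),
        (∀ (r : ℕ) [Fact r.Prime], ∀ α ∈ E r, IsIntegral ℤ_[r] (Polynomial.aeval α f)) ∧
        s ≠ 0 ∧ ¬ ((p : ℤ) ∣ s) ∧ g = ((s : ℚ))⁻¹ • f)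
      ↔ (∀ α ∈ E p, IsIntegral ℤ_[p] (Polynomial.aeval α g)) := by
  constructor
  · rintro ⟨f, s, hf, hs0, hps, rfl⟩ α hα
    rw [map_smul, Algebra.smul_def]
    refine (aux_ratcast_integral p _ ?_).mul (hf p α hα)
    rw [Rat.cast_inv, norm_inv, aux_norm_one_s9 p s hps]
    norm_num
  · intro h
    set d : ℕ := ∏ i ∈ g.support, (g.coeff i).den with hd_def
    have hd : d ≠ 0 := Finset.prod_ne_zero_iff.mpr (fun i _ => (g.coeff i).den_nz)
    set k : ℕ := d.factorization p with hk_def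
    set m : ℕ := d / p ^ k with hm_def
    have hpm : ¬ p ∣ m := Nat.not_dvd_ordCompl (Fact.out) hd
    have hm0 : m ≠ 0 := (Nat.ordCompl_pos p hd).ne'
    have hdm : p ^ k * m = d := Nat.ordProj_mul_ordCompl_eq_self d p
    have hint : ∀ i, ∃ n : ℤ, (d : ℚ) * g.coeff i = n := by
      intro i
      by_cases hi : i ∈ g.support
      · obtain ⟨t, ht⟩ := Finset.dvd_prod_of_mem (fun i => (g.coeff i).den) hi
        refine ⟨(t : ℤ) * (g.coeff i).num, ?_⟩
        rw [← hd_def] at ht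
        rw [ht]
        push_cast
        rw [mul_comm ((g.coeff i).den : ℚ) (t:ℚ), mul_assoc, mul_comm ((g.coeff i).den : ℚ) _,
          Rat.mul_den_eq_num]
      · refine ⟨0, ?_⟩
        simp [Polynomial.notMem_support_iff.mp hi]
    refine ⟨(m : ℚ) • g, (m : ℤ), ?_, ?_, ?_, ?_⟩
    · intro r _ α hα
      by_cases hrp : r = p
      · subst hrp
        rw [map_smul, Algebra.smul_def, eq_ratCast]
        rw [show ((m:ℚ) : AlgebraicClosure ℚ_[r]) = algebraMap ℚ _ (m:ℚ) from (eq_ratCast _ _).symm]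
        refine (aux_ratcast_integral r (m:ℚ) ?_).mul (h α hα)
        have : ((m:ℚ) : ℚ_[r]) = ((m : ℤ) : ℚ_[r]) := by push_cast; ring
        rw [this]
        exact Padic.norm_int_le_one _
      · refine aux_aeval_integral r α (hE r α hα) _ (fun i => ?_)
        rw [Polynomial.coeff_smul, smul_eq_mul]
        obtain ⟨n, hn⟩ := hint i
        have key : ((p:ℚ))^k * ((m:ℚ) * g.coeff i) = (n : ℚ) := by
          rw [← mul_assoc, ← hn, ← hdm]; push_cast; ring
        have key2 : ((p:ℚ_[r]))^k * (((m:ℚ) * g.coeff i : ℚ) : ℚ_[r]) = ((n:ℚ) : ℚ_[r]) := by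
          rw [← key]; push_cast; ring
        have hnormp : ‖((p:ℚ) : ℚ_[r])‖ = 1 := by
          refine aux_norm_one_s9 r (p : ℤ) ?_
          rw [Int.natCast_dvd_natCast]
          intro hdvd
          rcases (Nat.Prime.eq_one_or_self_of_dvd Fact.out r hdvd) with h1 | h1
          · exact Nat.Prime.ne_one Fact.out h1
          · exact hrp h1
        have : ‖((p:ℚ_[r]))^k * (((m:ℚ) * g.coeff i : ℚ) : ℚ_[r])‖ ≤ 1 := by
          rw [key2]
          have : ((n:ℚ) : ℚ_[r]) = ((n:ℤ) : ℚ_[r]) := by push_cast; ring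
          rw [this]; exact Padic.norm_int_le_one _
        rw [norm_mul, norm_pow] at this
        have hp2 : ((p:ℚ_[r])) = (((p:ℚ)) : ℚ_[r]) := by push_cast; ring
        rw [hp2, hnormp, one_pow, one_mul] at this
        exact this
    · exact_mod_cast hm0
    · rw [Int.natCast_dvd_natCast]; exact hpm
    · rw [smul_smul]
      have : (((m:ℤ) : ℚ))⁻¹ * (m : ℚ) = 1 := by
        rw [show (((m:ℤ):ℚ)) = (m:ℚ) by push_cast; ring]
        field_simp
      rw [this, one_smul]
end

section
/- Two singleton integer-valued polynomial rings coincide iff the elements are conjugate: for α, β in the ring of integers of finite extensions of Q_p, both transcendental over Q, the valuation rings V_{p,α} = {φ ∈ Q(X) : v_p(φ(α)) ≥ 0} and V_{p,β} are equal if and only if α and β are conjugate over Q_p (i.e., have the same minimal polynomial over Q_p). -/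
open Polynomial

namespace Stmt11Aux

variable {p : ℕ} [Fact p.Prime]

local notation "𝕃" => AlgebraicClosure ℚ_[p]

lemma ratCast_algebraMap (r : ℚ) :
    algebraMap ℚ 𝕃 r = algebraMap ℚ_[p] 𝕃 (r : ℚ_[p]) := by
  rw [eq_ratCast (algebraMap ℚ 𝕃), map_ratCast]

lemma isIntegral_of_norm_le_one {z : ℚ_[p]} (hz : ‖z‖ ≤ 1) :
    IsIntegral ℤ_[p] (algebraMap ℚ_[p] 𝕃 z) := by
  have : algebraMap ℚ_[p] 𝕃 z = algebraMap ℤ_[p] 𝕃 ⟨z, hz⟩ := by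
    exact (congrArg (algebraMap ℚ_[p] 𝕃) (PadicInt.algebraMap_apply (⟨z, hz⟩ : ℤ_[p])).symm).trans
      (IsScalarTower.algebraMap_apply ℤ_[p] ℚ_[p] 𝕃 _).symm
  rw [this]
  exact isIntegral_algebraMap

lemma pinv_pow_eq (k : ℕ) :
    ((p : 𝕃))⁻¹ ^ k = algebraMap ℚ_[p] 𝕃 (((p : ℚ_[p]))⁻¹ ^ k) := by
  rw [map_pow, map_inv₀, map_natCast]

/-- If `p⁻ᵏ y` is integral over `ℤ_p` for all `k`, then `y = 0`. -/
lemma zero_of_forall_isIntegral {y : 𝕃}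
    (h : ∀ k : ℕ, IsIntegral ℤ_[p] (((p : 𝕃))⁻¹ ^ k * y)) : y = 0 := by
  by_contra hy0
  have hp1 : (1 : ℝ) < (p : ℝ) := by
    exact_mod_cast (Fact.out : p.Prime).one_lt
  have hy : IsIntegral ℤ_[p] y := by simpa using h 0
  have hy' : IsIntegral ℚ_[p] y := hy.tower_top
  set G := minpoly ℚ_[p] y with hG
  have hGm : G.Monic := minpoly.monic hy'
  have hd : 0 < G.natDegree := minpoly.natDegree_pos hy'
  have hc0 : G.coeff 0 ≠ 0 := minpoly.coeff_zero_ne_zero hy' hy0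
  have hc0n : (0:ℝ) < ‖G.coeff 0‖ := norm_pos_iff.2 hc0
  obtain ⟨k, hk⟩ : ∃ k : ℕ, ‖G.coeff 0‖⁻¹ < (p : ℝ) ^ k :=
    pow_unbounded_of_one_lt _ hp1
  set s : ℚ_[p] := ((p : ℚ_[p]))⁻¹ ^ k with hs
  have hps : (p : ℚ_[p]) ≠ 0 := by
    exact_mod_cast (Fact.out : p.Prime).ne_zero
  have hs0 : s ≠ 0 := pow_ne_zero _ (inv_ne_zero hps)
  set z : 𝕃 := ((p : 𝕃))⁻¹ ^ k * y with hz
  have hzy : algebraMap ℚ_[p] 𝕃 s * y = z := by rw [hz, pinv_pow_eq]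
  have hzint : IsIntegral ℤ_[p] z := h k
  have hz' : IsIntegral ℚ_[p] z := hzint.tower_top
  set H := minpoly ℚ_[p] z with hH
  have hA : aeval z (G.scaleRoots s) = 0 := by
    rw [← hzy]; exact scaleRoots_aeval_eq_zero (minpoly.aeval _ _)
  have hdvd1 : H ∣ G.scaleRoots s := minpoly.dvd _ _ hA
  have hyz : algebraMap ℚ_[p] 𝕃 s⁻¹ * z = y := by
    rw [← hzy, ← mul_assoc, ← map_mul, inv_mul_cancel₀ hs0, map_one, one_mul]
  have hB : aeval y (H.scaleRoots s⁻¹) = 0 := by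
    rw [← hyz]; exact scaleRoots_aeval_eq_zero (minpoly.aeval _ _)
  have hdvd2 : G ∣ H.scaleRoots s⁻¹ := minpoly.dvd _ _ hB
  have hGs_monic : (G.scaleRoots s).Monic := (monic_scaleRoots_iff s).2 hGm
  have hHm : H.Monic := minpoly.monic hz'
  have hHs_monic : (H.scaleRoots s⁻¹).Monic := (monic_scaleRoots_iff s⁻¹).2 hHm
  have hdeg : H.natDegree = G.natDegree := by
    have h1 : H.natDegree ≤ (G.scaleRoots s).natDegree :=
      Polynomial.natDegree_le_of_dvd hdvd1 hGs_monic.ne_zero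
    have h2 : G.natDegree ≤ (H.scaleRoots s⁻¹).natDegree :=
      Polynomial.natDegree_le_of_dvd hdvd2 hHs_monic.ne_zero
    rw [Polynomial.natDegree_scaleRoots] at h1 h2
    omega
  have hEq : H = G.scaleRoots s := by
    obtain ⟨c, hc⟩ := hdvd1
    have hcne : c ≠ 0 := by
      rintro rfl; rw [mul_zero] at hc; exact hGs_monic.ne_zero hc
    have hdegc : c.natDegree = 0 := by
      have := Polynomial.natDegree_mul hHm.ne_zero hcne
      rw [← hc, Polynomial.natDegree_scaleRoots, ← hdeg] at this
      omega
    have hlc : c.leadingCoeff = 1 := by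
      have := hGs_monic
      rw [hc, Polynomial.Monic, Polynomial.leadingCoeff_mul, hHm.leadingCoeff, one_mul] at this
      exact this
    have : c = 1 := by
      rw [Polynomial.eq_C_of_natDegree_eq_zero hdegc]
      rw [Polynomial.leadingCoeff, hdegc] at hlc
      rw [hlc, map_one]
    rw [hc, this, mul_one]
  have hcoeff : H.coeff 0 = G.coeff 0 * s ^ G.natDegree := by
    rw [hEq, Polynomial.coeff_scaleRoots, tsub_zero]
  have hint : ‖H.coeff 0‖ ≤ 1 := by
    have := minpoly.isIntegrallyClosed_eq_field_fractions' ℚ_[p] hzint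
    rw [hH, this, Polynomial.coeff_map]
    exact PadicInt.norm_le_one _
  have hnorm : ‖H.coeff 0‖ = ‖G.coeff 0‖ * (p : ℝ) ^ (k * G.natDegree) := by
    rw [hcoeff, norm_mul, hs, ← pow_mul, norm_pow, norm_inv, Padic.norm_p, inv_inv]
  have hge : (p : ℝ) ^ k ≤ (p : ℝ) ^ (k * G.natDegree) :=
    pow_le_pow_right₀ hp1.le (by nlinarith [hd])
  have : (1:ℝ) < ‖G.coeff 0‖ * (p : ℝ) ^ (k * G.natDegree) := by
    have h1 : (1:ℝ) < ‖G.coeff 0‖ * (p : ℝ) ^ k := by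
      rw [← inv_lt_iff_one_lt_mul₀' hc0n] at *
      exact hk
    nlinarith [hc0n]
  rw [← hnorm] at this
  linarith [hint]

/-- Rational approximation of a `ℚ_p`-polynomial, uniformly good at all integral points. -/
lemma approx (g : ℚ_[p][X]) (k : ℕ) :
    ∃ q : ℚ[X], ∀ x : 𝕃, IsIntegral ℤ_[p] x →
      IsIntegral ℤ_[p] (((p : 𝕃))⁻¹ ^ k *
        (Polynomial.eval₂ (algebraMap ℚ 𝕃) x q - Polynomial.aeval x g)) := by
  have hp1 : (1 : ℝ) < (p : ℝ) := by exact_mod_cast (Fact.out : p.Prime).one_lt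
  have hε : (0:ℝ) < ((p:ℝ))⁻¹ ^ k := pow_pos (inv_pos.2 (by linarith)) k
  choose r hr using fun i : ℕ => Padic.rat_dense (p := p) (g.coeff i) hε
  refine ⟨∑ i ∈ Finset.range (g.natDegree + 1), Polynomial.C (r i) * Polynomial.X ^ i,
    fun x hx => ?_⟩
  have key : ((p : 𝕃))⁻¹ ^ k *
      (Polynomial.eval₂ (algebraMap ℚ 𝕃) x
          (∑ i ∈ Finset.range (g.natDegree + 1), Polynomial.C (r i) * Polynomial.X ^ i)
        - Polynomial.aeval x g)
      = ∑ i ∈ Finset.range (g.natDegree + 1),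
          algebraMap ℚ_[p] 𝕃 (((p : ℚ_[p]))⁻¹ ^ k * (((r i : ℚ_[p])) - g.coeff i)) * x ^ i := by
    rw [Polynomial.aeval_eq_sum_range' (lt_add_one _) x]
    rw [Polynomial.eval₂_finset_sum]
    simp only [Polynomial.eval₂_mul, Polynomial.eval₂_C, Polynomial.eval₂_X_pow]
    rw [← Finset.sum_sub_distrib, Finset.mul_sum]
    refine Finset.sum_congr rfl fun i _ => ?_
    rw [ratCast_algebraMap, Algebra.smul_def, pinv_pow_eq, map_mul, map_sub]
    ring
  rw [key]
  apply IsIntegral.sum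
  intro i _
  apply IsIntegral.mul _ (hx.pow i)
  apply isIntegral_of_norm_le_one
  have h1 : ‖((p : ℚ_[p]))⁻¹ ^ k‖ = (p:ℝ) ^ k := by
    rw [norm_pow, norm_inv, Padic.norm_p, inv_inv]
  have h2 : ‖((r i : ℚ_[p])) - g.coeff i‖ < ((p:ℝ))⁻¹ ^ k := by
    rw [← norm_neg, neg_sub]; exact hr i
  calc ‖((p : ℚ_[p]))⁻¹ ^ k * (((r i : ℚ_[p])) - g.coeff i)‖
      = (p:ℝ) ^ k * ‖((r i : ℚ_[p])) - g.coeff i‖ := by rw [norm_mul, h1]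
    _ ≤ (p:ℝ) ^ k * ((p:ℝ))⁻¹ ^ k := by
        apply mul_le_mul_of_nonneg_left h2.le (by positivity)
    _ = 1 := by rw [← mul_pow, mul_inv_cancel₀ (by linarith), one_pow]

/-- Galois conjugation commutes with evaluation of rational functions with `ℚ`-coefficients. -/
lemma eval_conj (σ : 𝕃 ≃ₐ[ℚ_[p]] 𝕃) (x : 𝕃) (φ : RatFunc ℚ) :
    σ (RatFunc.eval (algebraMap ℚ 𝕃) x φ) = RatFunc.eval (algebraMap ℚ 𝕃) (σ x) φ := by
  have hcomp : (σ : 𝕃 →+* 𝕃).comp (algebraMap ℚ 𝕃) = algebraMap ℚ 𝕃 :=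
    Subsingleton.elim _ _
  rw [RatFunc.eval, RatFunc.eval, map_div₀]
  congr 1
  · exact (Polynomial.hom_eval₂ φ.num (algebraMap ℚ 𝕃) (σ : 𝕃 →+* 𝕃) x).trans (by rw [hcomp]; rfl)
  · exact (Polynomial.hom_eval₂ φ.denom (algebraMap ℚ 𝕃) (σ : 𝕃 →+* 𝕃) x).trans (by rw [hcomp]; rfl)

lemma isIntegral_conj (σ : 𝕃 ≃ₐ[ℚ_[p]] 𝕃) {x : 𝕃} (hx : IsIntegral ℤ_[p] x) :
    IsIntegral ℤ_[p] (σ x) :=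
  hx.map (σ.toAlgHom.restrictScalars ℤ_[p])

end Stmt11Aux

open Stmt11Aux in
/-- For `α, β` in the ring of integers of finite extensions of `ℚ_p` (inside a fixed algebraic
closure), both transcendental over `ℚ`, the valuation rings
`V_{p,α} = {φ ∈ ℚ(X) : v_p(φ(α)) ≥ 0}` and `V_{p,β}` are equal if and only if `α` and `β` are
conjugate over `ℚ_p`, i.e. have the same minimal polynomial over `ℚ_p`. -/
theorem stmt11 (p : ℕ) [Fact p.Prime]
    (α β : AlgebraicClosure ℚ_[p])
    (hα : IsIntegral ℤ_[p] α) (hβ : IsIntegral ℤ_[p] β)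
    (hαtr : Transcendental ℚ α) (hβtr : Transcendental ℚ β) :
    (∀ φ : RatFunc ℚ,
        IsIntegral ℤ_[p] (RatFunc.eval (algebraMap ℚ (AlgebraicClosure ℚ_[p])) α φ) ↔
        IsIntegral ℤ_[p] (RatFunc.eval (algebraMap ℚ (AlgebraicClosure ℚ_[p])) β φ))
      ↔ minpoly ℚ_[p] α = minpoly ℚ_[p] β := by
  have hα' : IsIntegral ℚ_[p] α := hα.tower_top
  have hβ' : IsIntegral ℚ_[p] β := hβ.tower_top
  constructor
  · intro h
    have key : ∀ k : ℕ, IsIntegral ℤ_[p]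
        (((p : AlgebraicClosure ℚ_[p]))⁻¹ ^ k * Polynomial.aeval β (minpoly ℚ_[p] α)) := by
      intro k
      obtain ⟨q, hq⟩ := approx (minpoly ℚ_[p] α) k
      have h1 := hq α hα
      rw [minpoly.aeval, sub_zero] at h1
      set φ : RatFunc ℚ := algebraMap ℚ[X] (RatFunc ℚ) (Polynomial.C ((p:ℚ)⁻¹ ^ k) * q) with hφ
      have heval : ∀ x : AlgebraicClosure ℚ_[p],
          RatFunc.eval (algebraMap ℚ (AlgebraicClosure ℚ_[p])) x φ
            = ((p : AlgebraicClosure ℚ_[p]))⁻¹ ^ k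
                * Polynomial.eval₂ (algebraMap ℚ (AlgebraicClosure ℚ_[p])) x q := by
        intro x
        rw [hφ, RatFunc.eval_algebraMap]
        simp [Polynomial.eval₂_mul, Polynomial.eval₂_C, map_pow, map_inv₀]
      have h2 : IsIntegral ℤ_[p]
          (RatFunc.eval (algebraMap ℚ (AlgebraicClosure ℚ_[p])) α φ) := by
        rw [heval]; exact h1
      have h3 := (h φ).1 h2
      rw [heval] at h3
      have h4 := hq β hβ
      have h5 := h3.sub h4
      convert h5 using 1
      · rfl
      · ring
    have hzero : Polynomial.aeval β (minpoly ℚ_[p] α) = 0 := zero_of_forall_isIntegral key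
    have hdvd : minpoly ℚ_[p] β ∣ minpoly ℚ_[p] α := minpoly.dvd _ _ hzero
    exact (Polynomial.eq_of_monic_of_associated (minpoly.monic hβ') (minpoly.monic hα')
      ((minpoly.irreducible hβ').associated_of_dvd (minpoly.irreducible hα') hdvd)).symm
  · intro hmin φ
    obtain ⟨σ, hσ⟩ := minpoly.exists_algEquiv_of_root (hα'.isAlgebraic)
      (show Polynomial.aeval β (minpoly ℚ_[p] α) = 0 by rw [hmin]; exact minpoly.aeval _ _)
    obtain ⟨τ, hτ⟩ := minpoly.exists_algEquiv_of_root (hβ'.isAlgebraic)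
      (show Polynomial.aeval α (minpoly ℚ_[p] β) = 0 by rw [← hmin]; exact minpoly.aeval _ _)
    constructor
    · intro hint
      have := isIntegral_conj τ hint
      rwa [eval_conj, hτ] at this
    · intro hint
      have := isIntegral_conj σ hint
      rwa [eval_conj, hσ] at this
end
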